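/- Let G(α) = 2(1+α) log(2(1+α)/n₁) + 2(1−α) log(2(1−α)/n₂) where n₁ = (1+α) + s(1−α), n₂ = (1−s)(1−α), for α ∈ (α₀, 1) and a constant s satisfying −(1+α)/(1−α) ≤ s ≤ 1 (so that n₁ ≥ 0, n₂ ≥ 0). Then d³G/dα³ = (8s²/(n₁³(1+α)²))·[(3α+1)s − 3α − 3] ≤ 0, i.e., d²G/dα² is nonincreasing; moreover d²G/dα² at α = 1 equals s² ≥ 0, hence G is convex on the interval. -/

import Mathlib

/-!
Along the segment, `G''` is antitone: its derivative is
`8 s² / (n₁³ (1 + α)²) · ((3α + 1) s - 3α - 3)`, and the last factor equals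
`-(2 (1 + α)(1 - s) + n₁) ≤ 0`. Hence `G''(α) ≥ G''(1) = s² ≥ 0` on the interval, so `G` is convex.
-/

/-- `n₁ = (1+α) + s(1-α)` along the boundary segment. -/
noncomputable def n1f (s a : ℝ) : ℝ := (1 + a) + s * (1 - a)

/-- The correction term along the boundary segment of the projected cube. -/
noncomputable def Gf (s a : ℝ) : ℝ :=
  2 * (1 + a) * Real.log (2 * (1 + a) / n1f s a)
    + 2 * (1 - a) * Real.log (2 * (1 - a) / ((1 - s) * (1 - a)))

/-- The second derivative `d²G/dα²`. -/
noncomputable def G2f (s a : ℝ) : ℝ :=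
  4 / (2 * (1 + a)) - 2 * (1 - s) / n1f s a - 4 * s * (1 - s) / (n1f s a) ^ 2

noncomputable def G1f (s a : ℝ) : ℝ :=
  2 * Real.log (2 * (1 + a) / n1f s a) + 4 * s / n1f s a
    - 2 * Real.log (2 * (1 - a) / ((1 - s) * (1 - a)))

noncomputable def G3f (s a : ℝ) : ℝ :=
  (8 * s ^ 2 / ((n1f s a) ^ 3 * (1 + a) ^ 2)) * ((3 * a + 1) * s - 3 * a - 3)

theorem convexOn_of_hasDerivAt2_nonneg {D : Set ℝ} (hD : Convex ℝ D) (hDo : IsOpen D)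
    {f f' f'' : ℝ → ℝ} (hf : ∀ x ∈ D, HasDerivAt f (f' x) x)
    (hf' : ∀ x ∈ D, HasDerivAt f' (f'' x) x) (hf''₀ : ∀ x ∈ D, 0 ≤ f'' x) : ConvexOn ℝ D f := by
  refine convexOn_of_hasDerivWithinAt2_nonneg hD (f' := f') (f'' := f'')
    (fun x hx => (hf x hx).continuousAt.continuousWithinAt) ?_ ?_ ?_ <;> rw [hDo.interior_eq]
  exacts [fun x hx => (hf x hx).hasDerivWithinAt, fun x hx => (hf' x hx).hasDerivWithinAt, hf''₀]

section Computations

variable (s : ℝ) {a : ℝ}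

theorem n1f_one : n1f s 1 = 2 := by
  norm_num [n1f]

theorem G2f_one : G2f s 1 = s ^ 2 := by
  rw [G2f, n1f_one]
  ring

theorem n1f_pos (ha : a < 1) (hs : -((1 + a) / (1 - a)) < s) : 0 < n1f s a := by
  have h : 0 < 1 - a := sub_pos.mpr ha
  rw [neg_lt, lt_div_iff₀ h] at hs
  unfold n1f
  linarith

theorem hasDerivAt_n1f (a : ℝ) : HasDerivAt (n1f s) (1 - s) a := by
  have h := ((hasDerivAt_id a).const_add 1).add (((hasDerivAt_id a).const_sub 1).const_mul s)
  exact h.congr_deriv (by ring)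

theorem hasDerivAt_log_ratio (h1 : 1 + a ≠ 0) (hn : n1f s a ≠ 0) :
    HasDerivAt (fun x => Real.log (2 * (1 + x) / n1f s x)) (2 * s / ((1 + a) * n1f s a)) a := by
  have h := ((((hasDerivAt_id a).const_add 1).const_mul 2).div (hasDerivAt_n1f s a) hn).log
    (by simp [h1, hn])
  refine h.congr_deriv ?_
  simp only [id, n1f, Pi.div_apply] at hn ⊢
  field_simp
  ring

/-- For `x ≠ 1` the argument of the logarithm is the constant `2 / (1 - s)`. -/
theorem hasDerivAt_log_boundary (ha : a ≠ 1) :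
    HasDerivAt (fun x => Real.log (2 * (1 - x) / ((1 - s) * (1 - x)))) 0 a := by
  refine (hasDerivAt_const a (Real.log (2 / (1 - s)))).congr_of_eventuallyEq ?_
  filter_upwards [isOpen_ne.mem_nhds ha] with x hx
  rw [mul_div_mul_right _ _ (sub_ne_zero.mpr hx.symm)]

theorem hasDerivAt_Gf (h1 : 1 + a ≠ 0) (h2 : a ≠ 1) (hn : n1f s a ≠ 0) :
    HasDerivAt (Gf s) (G1f s a) a := by
  have h := ((((hasDerivAt_id a).const_add 1).const_mul 2).mul (hasDerivAt_log_ratio s h1 hn)).add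
    ((((hasDerivAt_id a).const_sub 1).const_mul 2).mul (hasDerivAt_log_boundary s h2))
  refine h.congr_deriv ?_
  simp only [G1f, id]
  field_simp
  ring

theorem hasDerivAt_G1f (h1 : 1 + a ≠ 0) (h2 : a ≠ 1) (hn : n1f s a ≠ 0) :
    HasDerivAt (G1f s) (G2f s a) a := by
  have h := (((hasDerivAt_log_ratio s h1 hn).const_mul 2).add
    ((hasDerivAt_const a (4 * s)).div (hasDerivAt_n1f s a) hn)).sub
    ((hasDerivAt_log_boundary s h2).const_mul 2)
  refine h.congr_deriv ?_
  simp only [G2f, n1f] at hn ⊢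
  field_simp
  ring

theorem hasDerivAt_G2f (h1 : 1 + a ≠ 0) (hn : n1f s a ≠ 0) :
    HasDerivAt (G2f s) (G3f s a) a := by
  have h := (((hasDerivAt_const a (4 : ℝ)).div (((hasDerivAt_id a).const_add 1).const_mul 2)
    (by simpa using h1)).sub ((hasDerivAt_const a (2 * (1 - s))).div (hasDerivAt_n1f s a) hn)).sub
    ((hasDerivAt_const a (4 * s * (1 - s))).div ((hasDerivAt_n1f s a).pow 2) (pow_ne_zero 2 hn))
  refine h.congr_deriv ?_
  simp only [G3f, n1f, id, Pi.pow_apply, Nat.cast_ofNat] at hn ⊢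
  field_simp
  ring

end Computations

section Signs

variable {s a : ℝ}

theorem G3f_nonpos (h1 : 0 ≤ 1 + a) (hs : s ≤ 1) (hn : 0 ≤ n1f s a) : G3f s a ≤ 0 := by
  have hfactor : (3 * a + 1) * s - 3 * a - 3 = -(2 * (1 + a) * (1 - s) + n1f s a) := by
    unfold n1f; ring
  rw [G3f, hfactor]
  have : 0 ≤ 2 * (1 + a) * (1 - s) := mul_nonneg (by positivity) (sub_nonneg.mpr hs)
  exact mul_nonpos_of_nonneg_of_nonpos (by positivity) (by linarith)

theorem antitoneOn_G2f {D : Set ℝ} (hD : Convex ℝ D) (hs : s ≤ 1)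
    (hpos : ∀ a ∈ D, 0 < 1 + a ∧ 0 < n1f s a) : AntitoneOn (G2f s) D := by
  have hderiv : ∀ a ∈ D, HasDerivAt (G2f s) (G3f s a) a := fun a ha =>
    hasDerivAt_G2f s (hpos a ha).1.ne' (hpos a ha).2.ne'
  refine antitoneOn_of_hasDerivWithinAt_nonpos hD
    (fun a ha => (hderiv a ha).continuousAt.continuousWithinAt)
    (fun a ha => (hderiv a (interior_subset ha)).hasDerivWithinAt) fun a ha => ?_
  obtain ⟨h1, hn⟩ := hpos a (interior_subset ha)
  exact G3f_nonpos h1.le hs hn.le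

end Signs

theorem stmt12_general (s α₀ : ℝ) (hα₀ : -1 ≤ α₀) (hs1 : s < 1)
    (hs2 : ∀ a ∈ Set.Ioo α₀ (1 : ℝ), -((1 + a) / (1 - a)) < s) :
    (∀ a ∈ Set.Ioo α₀ (1 : ℝ),
      HasDerivAt (G2f s)
        ((8 * s ^ 2 / ((n1f s a) ^ 3 * (1 + a) ^ 2)) * ((3 * a + 1) * s - 3 * a - 3)) a ∧
      (8 * s ^ 2 / ((n1f s a) ^ 3 * (1 + a) ^ 2)) * ((3 * a + 1) * s - 3 * a - 3) ≤ 0) ∧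
    G2f s 1 = s ^ 2 ∧
    ConvexOn ℝ (Set.Ioo α₀ 1) (Gf s) := by
  have hIoc : ∀ a ∈ Set.Ioc α₀ 1, 0 < 1 + a ∧ 0 < n1f s a := by
    rintro a ⟨ha₀, ha1⟩
    refine ⟨by linarith, ?_⟩
    rcases ha1.eq_or_lt with rfl | ha1
    · rw [n1f_one]; norm_num
    · exact n1f_pos s ha1 (hs2 a ⟨ha₀, ha1⟩)
  have hIoo : ∀ a ∈ Set.Ioo α₀ 1, 1 + a ≠ 0 ∧ a ≠ 1 ∧ n1f s a ≠ 0 := fun a ha =>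
    have h := hIoc a (Set.Ioo_subset_Ioc_self ha)
    ⟨h.1.ne', ha.2.ne, h.2.ne'⟩
  have hG2f_nonneg : ∀ a ∈ Set.Ioo α₀ 1, 0 ≤ G2f s a := fun a ha =>
    calc 0 ≤ s ^ 2 := sq_nonneg s
      _ = G2f s 1 := (G2f_one s).symm
      _ ≤ G2f s a := antitoneOn_G2f (convex_Ioc α₀ 1) hs1.le hIoc (Set.Ioo_subset_Ioc_self ha)
          ⟨ha.1.trans ha.2, le_rfl⟩ ha.2.le
  refine ⟨fun a ha => ⟨hasDerivAt_G2f s (hIoo a ha).1 (hIoo a ha).2.2, ?_⟩, G2f_one s, ?_⟩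
  · have h := hIoc a (Set.Ioo_subset_Ioc_self ha)
    exact G3f_nonpos h.1.le hs1.le h.2.le
  · refine convexOn_of_hasDerivAt2_nonneg (convex_Ioo α₀ 1) isOpen_Ioo (f' := G1f s)
      (fun a ha => ?_) (fun a ha => ?_) hG2f_nonneg
    · obtain ⟨h1, h2, hn⟩ := hIoo a ha
      exact hasDerivAt_Gf s h1 h2 hn
    · obtain ⟨h1, h2, hn⟩ := hIoo a ha
      exact hasDerivAt_G1f s h1 h2 hn

theorem stmt12 (s α₀ : ℝ) (hα₀ : -1 ≤ α₀) (hα₀1 : α₀ < 1) (hs1 : s < 1)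
    (hs2 : ∀ a ∈ Set.Ioo α₀ (1 : ℝ), -((1 + a) / (1 - a)) < s) :
    (∀ a ∈ Set.Ioo α₀ (1 : ℝ),
      HasDerivAt (G2f s)
        ((8 * s ^ 2 / ((n1f s a) ^ 3 * (1 + a) ^ 2)) * ((3 * a + 1) * s - 3 * a - 3)) a ∧
      (8 * s ^ 2 / ((n1f s a) ^ 3 * (1 + a) ^ 2)) * ((3 * a + 1) * s - 3 * a - 3) ≤ 0) ∧
    G2f s 1 = s ^ 2 ∧
    ConvexOn ℝ (Set.Ioo α₀ 1) (Gf s) :=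
  stmt12_general s α₀ hα₀ hs1 hs2
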